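/- Let G be a finite group. Then the order superpower graph S(G) is minimally connected if and only if G is a p-group for some prime p. -/

import Mathlib

/-- The degree of a vertex: the number of its neighbours. -/
noncomputable def gDeg {V : Type*} (G : SimpleGraph V) (v : V) : ℕ :=
  (G.neighborSet v).ncard

/-- The minimum degree of a graph. -/
noncomputable def minDeg {V : Type*} (G : SimpleGraph V) : ℕ :=
  sInf (Set.range (gDeg G))

/-- The edge connectivity: the minimum size of a set of edges whose removal
disconnects the graph. -/
noncomputable def edgeConn {V : Type*} (G : SimpleGraph V) : ℕ :=
  sInf {n : ℕ | ∃ S : Set (Sym2 V), S ⊆ G.edgeSet ∧ S.ncard = n ∧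
    ¬ (G.deleteEdges S).Connected}

/-- The vertex connectivity: the minimum size of a set of vertices whose removal
disconnects the graph or leaves a single vertex. -/
noncomputable def vertexConn {V : Type*} (G : SimpleGraph V) : ℕ :=
  sInf {n : ℕ | ∃ S : Set V, S.ncard = n ∧ Sᶜ.Nonempty ∧
    (¬ (G.induce Sᶜ).Preconnected ∨ Sᶜ.ncard = 1)}

/-- A graph is minimally edge connected if deleting any edge decreases the
edge connectivity by one. -/
def MinEdgeConnected {V : Type*} (G : SimpleGraph V) : Prop :=
  ∀ e ∈ G.edgeSet, edgeConn (G.deleteEdges {e}) = edgeConn G - 1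

/-- A graph is minimally connected if deleting any edge decreases the
vertex connectivity by one. -/
def MinConnected {V : Type*} (G : SimpleGraph V) : Prop :=
  ∀ e ∈ G.edgeSet, vertexConn (G.deleteEdges {e}) = vertexConn G - 1

/-- The power graph of a group: distinct `x, y` are adjacent iff one is a
natural power of the other. -/
def powerGraph (G : Type*) [Group G] : SimpleGraph G :=
  SimpleGraph.fromRel (fun x y => ∃ m : ℕ, y = x ^ m)

/-- The enhanced power graph of a group: distinct `x, y` are adjacent iff they
lie in a common cyclic subgroup. -/
def enhancedPowerGraph (G : Type*) [Group G] : SimpleGraph G :=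
  SimpleGraph.fromRel
    (fun x y => ∃ z : G, x ∈ Subgroup.zpowers z ∧ y ∈ Subgroup.zpowers z)

/-- The order superpower graph of a group: distinct `x, y` are adjacent iff the
order of one divides the order of the other. -/
def superpowerGraph (G : Type*) [Group G] : SimpleGraph G :=
  SimpleGraph.fromRel (fun x y => orderOf x ∣ orderOf y)

/-!
If `|G| = p ^ n`, every element order is a power of `p`, so `S(G)` is the complete graph and
deleting an edge of `Kₙ` lowers the connectivity from `n - 1` to `n - 2`.

Otherwise `|G|` has two distinct prime divisors, one of them an odd prime `q`. Elements of two
distinct prime orders are not adjacent, so `κ(S(G)) ≤ |G| - 2`. An element `a` of order `q`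
differs from `a⁻¹` and has the same order, so `a` and `a⁻¹` are adjacent twins. In a graph that
is not complete, deleting the edge between adjacent twins does not lower the connectivity, while
`κ(S(G)) ≥ 1` because the identity is adjacent to everything.
-/

namespace SimpleGraph

variable {V : Type*} {Γ Δ : SimpleGraph V} {x y : V}

theorem Preconnected.of_adj_reachable (hΓ : Γ.Preconnected)
    (h : ∀ a b, Γ.Adj a b → Δ.Reachable a b) : Δ.Preconnected := by
  simp_rw [Preconnected, reachable_iff_reflTransGen] at hΓ h ⊢
  exact fun u v => Relation.reflTransGen_closed h _ _ (hΓ u v)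

theorem preconnected_of_forall_adj (z : V) (h : ∀ w, w ≠ z → Γ.Adj z w) : Γ.Preconnected := by
  have hz (w : V) : Γ.Reachable z w := by
    rcases eq_or_ne w z with rfl | hw
    · rfl
    · exact (h w hw).reachable
  exact fun u v => (hz u).symm.trans (hz v)

theorem not_preconnected_induce_pair {u v : V} (huv : u ≠ v) (h : ¬ Γ.Adj u v) :
    ¬ (Γ.induce {u, v}).Preconnected := by
  intro hp
  obtain ⟨p⟩ := hp ⟨u, by simp⟩ ⟨v, by simp⟩
  cases p with
  | nil => exact huv rfl
  | @cons _ c _ hadj _ =>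
    rcases c.2 with hc | hc
    · exact hadj.ne (Subtype.ext hc.symm)
    · exact h (hc ▸ hadj)

theorem exists_common_adj_of_preconnected_induce
    (htwin : ∀ z, z ≠ x → z ≠ y → (Γ.Adj x z ↔ Γ.Adj y z)) {A : Set V}
    (hA : (Γ.induce A).Preconnected)
    (hx : x ∈ A) {w : V} (hw : w ∈ A) (hwx : w ≠ x) (hwy : w ≠ y) :
    ∃ z ∈ A, Γ.Adj x z ∧ Γ.Adj y z := by
  obtain ⟨p⟩ := hA ⟨x, hx⟩ ⟨w, hw⟩
  obtain ⟨d, -, hd, hd'⟩ := p.exists_boundary_dart {a | a.1 = x ∨ a.1 = y} (Or.inl rfl)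
    (by simp [hwx, hwy])
  simp only [Set.mem_ofPred_eq, not_or] at hd hd'
  have hadj : Γ.Adj d.fst d.snd := d.adj
  refine ⟨d.snd, d.snd.2, ?_⟩
  rcases hd with h | h <;> rw [h] at hadj
  · exact ⟨hadj, (htwin _ hd'.1 hd'.2).1 hadj⟩
  · exact ⟨(htwin _ hd'.1 hd'.2).2 hadj, hadj⟩

theorem preconnected_induce_deleteEdges {A : Set V} (hA : (Γ.induce A).Preconnected)
    (hcommon : x ∈ A → y ∈ A → ∃ z ∈ A, Γ.Adj x z ∧ Γ.Adj y z) :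
    ((Γ.deleteEdges {s(x, y)}).induce A).Preconnected := by
  refine hA.of_adj_reachable fun a b hab => ?_
  by_cases he : s(a.1, b.1) = s(x, y)
  · have mem_A (c : V) (hc : c ∈ s(a.1, b.1)) : c ∈ A := by
      rcases Sym2.mem_iff.1 hc with rfl | rfl
      exacts [a.2, b.2]
    obtain ⟨z, hzA, hxz, hyz⟩ :=
      hcommon (mem_A x (he ▸ Sym2.mem_mk_left x y)) (mem_A y (he ▸ Sym2.mem_mk_right x y))
    have adj_z (c : A) (hc : c.1 ∈ s(x, y)) :
        ((Γ.deleteEdges {s(x, y)}).induce A).Adj c ⟨z, hzA⟩ := by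
      rcases Sym2.mem_iff.1 hc with hc | hc <;> simp [hc, hxz, hyz, hxz.ne', hyz.ne']
    exact (adj_z a (he ▸ Sym2.mem_mk_left _ _)).reachable.trans
      (adj_z b (he ▸ Sym2.mem_mk_right _ _)).symm.reachable
  · exact Adj.reachable (by simpa [he] using hab)

end SimpleGraph

open SimpleGraph

section VertexConn

variable {V : Type*} [Finite V] {Γ : SimpleGraph V}

theorem vertexConn_le_card_sub {A : Set V} (hA : A.Nonempty)
    (h : ¬ (Γ.induce A).Preconnected ∨ A.ncard = 1) : vertexConn Γ ≤ Nat.card V - A.ncard :=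
  Nat.sInf_le ⟨Aᶜ, Set.ncard_compl A, by rwa [compl_compl], by rwa [compl_compl]⟩

theorem le_vertexConn [Nonempty V] {k : ℕ}
    (h : ∀ A : Set V, A.Nonempty → (¬ (Γ.induce A).Preconnected ∨ A.ncard = 1) →
      k + A.ncard ≤ Nat.card V) :
    k ≤ vertexConn Γ := by
  obtain ⟨v⟩ := ‹Nonempty V›
  refine le_csInf ⟨_, {v}ᶜ, rfl, by simp, by simp⟩ ?_
  rintro _ ⟨S, rfl, hS, hcut⟩
  have := h Sᶜ hS hcut
  have := Set.ncard_add_ncard_compl S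
  omega

theorem vertexConn_le_card_sub_one [Nonempty V] : vertexConn Γ ≤ Nat.card V - 1 := by
  obtain ⟨v⟩ := ‹Nonempty V›
  simpa using vertexConn_le_card_sub (Γ := Γ) (Set.singleton_nonempty v)
    (Or.inr (Set.ncard_singleton v))

theorem vertexConn_le_card_sub_two {u v : V} (huv : u ≠ v) (h : ¬ Γ.Adj u v) :
    vertexConn Γ ≤ Nat.card V - 2 := by
  rw [← Set.ncard_pair huv]
  exact vertexConn_le_card_sub (Set.insert_nonempty u {v})
    (Or.inl (not_preconnected_induce_pair huv h))

theorem one_le_vertexConn (hΓ : Γ.Preconnected) (hV : 1 < Nat.card V) : 1 ≤ vertexConn Γ := by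
  have : Nonempty V := Finite.card_pos_iff.1 (by omega)
  refine le_vertexConn fun A _ hcut => ?_
  rcases eq_or_ne A Set.univ with rfl | hA
  · rw [Set.ncard_univ] at hcut
    exact absurd hcut (not_or.2 ⟨not_not.2 (Γ.induceUnivIso.preconnected_iff.2 hΓ), by omega⟩)
  · have := Set.ncard_lt_card hA
    omega

theorem vertexConn_top [Nonempty V] : vertexConn (⊤ : SimpleGraph V) = Nat.card V - 1 := by
  refine le_antisymm vertexConn_le_card_sub_one (le_vertexConn fun A hA hcut => ?_)
  have htop : (⊤ : SimpleGraph V).induce A = ⊤ := by ext; simp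
  rw [htop] at hcut
  have := hcut.resolve_left (not_not.2 preconnected_top)
  have := Nat.card_pos (α := V)
  omega

theorem vertexConn_top_deleteEdges {x y : V} (hxy : x ≠ y) :
    vertexConn ((⊤ : SimpleGraph V).deleteEdges {s(x, y)}) = Nat.card V - 2 := by
  have : Nonempty V := ⟨x⟩
  refine le_antisymm (vertexConn_le_card_sub_two hxy (by simp))
    (le_vertexConn fun A hA hcut => ?_)
  suffices A.ncard ≤ 2 by
    have := Set.ncard_pair hxy ▸ Set.ncard_le_card ({x, y} : Set V)
    omega
  by_contra! hA3
  obtain ⟨z, hzA, hz⟩ := Set.exists_mem_notMem_of_ncard_lt_ncard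
    ((Set.ncard_pair hxy).trans_lt hA3)
  simp only [Set.mem_insert_iff, Set.mem_singleton_iff, not_or] at hz
  refine hcut.elim (· (preconnected_of_forall_adj ⟨z, hzA⟩ fun w hw => ?_)) (by omega)
  have hzw : z ≠ w := fun h => hw (Subtype.ext h.symm)
  simp [hzw, hz.1, hz.2]

theorem minConnected_top : MinConnected (⊤ : SimpleGraph V) := by
  intro e he
  induction e using Sym2.ind with
  | h x y =>
    have : Nonempty V := ⟨x⟩
    rw [vertexConn_top_deleteEdges (by simpa using he), vertexConn_top]
    omega

theorem vertexConn_le_vertexConn_deleteEdges_of_twins {x y : V} (hxy : Γ.Adj x y)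
    (htwin : ∀ z, z ≠ x → z ≠ y → (Γ.Adj x z ↔ Γ.Adj y z))
    (hΓ : vertexConn Γ ≤ Nat.card V - 2) :
    vertexConn Γ ≤ vertexConn (Γ.deleteEdges {s(x, y)}) := by
  have : Nontrivial V := ⟨x, y, hxy.ne⟩
  have := Finite.one_lt_card (α := V)
  refine le_vertexConn fun A hA hcut => ?_
  by_cases hsmall : A.ncard ≤ 2
  · omega
  -- With a third vertex `w` left, a walk in `Γ` from `x` to `w` leaves `{x, y}` through a
  -- common neighbour of the twins, which reconnects them after the edge is deleted.
  suffices ¬ (Γ.induce A).Preconnected by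
    have := vertexConn_le_card_sub hA (Or.inl this)
    have := Set.ncard_le_card A
    omega
  intro hpre
  obtain ⟨w, hwA, hw⟩ := Set.exists_mem_notMem_of_ncard_lt_ncard
    ((Set.ncard_pair hxy.ne).trans_lt (not_le.1 hsmall))
  simp only [Set.mem_insert_iff, Set.mem_singleton_iff, not_or] at hw
  refine hcut.elim (· (preconnected_induce_deleteEdges hpre fun hx _ =>
    exists_common_adj_of_preconnected_induce htwin hpre hx hwA hw.1 hw.2)) (by omega)

theorem not_minConnected_of_twins (hΓ : Γ.Preconnected) {x y : V} (hxy : Γ.Adj x y)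
    (htwin : ∀ z, z ≠ x → z ≠ y → (Γ.Adj x z ↔ Γ.Adj y z)) {u v : V} (huv : u ≠ v)
    (hnuv : ¬ Γ.Adj u v) : ¬ MinConnected Γ := by
  intro hmin
  have hpos := one_le_vertexConn hΓ (Finite.one_lt_card_iff_nontrivial.2 ⟨x, y, hxy.ne⟩)
  have hdrop := hmin s(x, y) hxy
  have hle := vertexConn_le_vertexConn_deleteEdges_of_twins hxy htwin
    (vertexConn_le_card_sub_two huv hnuv)
  omega

end VertexConn

theorem Nat.exists_distinct_prime_dvd_of_not_prime_pow {N : ℕ} (hN : N ≠ 0)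
    (h : ¬ ∃ p n : ℕ, p.Prime ∧ N = p ^ n) :
    ∃ p q : ℕ, p.Prime ∧ q.Prime ∧ p ≠ q ∧ p ∣ N ∧ q ∣ N := by
  have hN1 : N ≠ 1 := by
    rintro rfl
    exact h ⟨2, 0, Nat.prime_two, rfl⟩
  by_contra! hne
  exact h ⟨N.minFac, _, Nat.minFac_prime hN1, Nat.eq_prime_pow_of_unique_prime_dvd hN
    fun hd hdN => by_contra fun hdp =>
      hne _ _ (Nat.minFac_prime hN1) hd (Ne.symm hdp) (Nat.minFac_dvd N) hdN⟩

section Superpower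

variable {G : Type*} [Group G]

theorem superpowerGraph_adj {a b : G} : (superpowerGraph G).Adj a b ↔
    a ≠ b ∧ (orderOf a ∣ orderOf b ∨ orderOf b ∣ orderOf a) :=
  fromRel_adj _ a b

theorem superpowerGraph_preconnected : (superpowerGraph G).Preconnected :=
  preconnected_of_forall_adj 1 fun _ ha => superpowerGraph_adj.2 ⟨ha.symm, Or.inl (by simp)⟩

theorem superpowerGraph_adj_iff_of_orderOf_eq {x y z : G} (h : orderOf x = orderOf y)
    (hzx : z ≠ x) (hzy : z ≠ y) :
    (superpowerGraph G).Adj x z ↔ (superpowerGraph G).Adj y z := by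
  simp [superpowerGraph_adj, h, hzx.symm, hzy.symm]

theorem IsPGroup.superpowerGraph_eq_top {p : ℕ} [Fact p.Prime] (hG : IsPGroup p G) :
    superpowerGraph G = ⊤ := by
  ext a b
  obtain ⟨i, hi⟩ := hG.exists_orderOf_eq_pow a
  obtain ⟨j, hj⟩ := hG.exists_orderOf_eq_pow b
  simp only [superpowerGraph_adj, hi, hj, top_adj, and_iff_left_iff_imp]
  exact fun _ => (le_total i j).imp (pow_dvd_pow p) (pow_dvd_pow p)

theorem ne_inv_of_orderOf_eq_prime {a : G} {r : ℕ} (hr : r.Prime) (hr2 : r ≠ 2)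
    (ha : orderOf a = r) : a ≠ a⁻¹ := by
  intro h
  have : a ^ 2 = 1 := by rw [sq, ← eq_inv_iff_mul_eq_one]; exact h
  exact hr2 ((Nat.prime_dvd_prime_iff_eq hr Nat.prime_two).1
    (ha ▸ orderOf_dvd_of_pow_eq_one this))

theorem not_minConnected_superpowerGraph [Finite G] {p q : ℕ} (hp : p.Prime) (hq : q.Prime)
    (hpq : p ≠ q) (hpG : p ∣ Nat.card G) (hqG : q ∣ Nat.card G) :
    ¬ MinConnected (superpowerGraph G) := by
  wlog hq2 : q ≠ 2 generalizing p q
  · exact this hq hp hpq.symm hqG hpG (not_not.1 hq2 ▸ hpq)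
  have := Fact.mk hp
  have := Fact.mk hq
  obtain ⟨b, hb⟩ := exists_prime_orderOf_dvd_card' p hpG
  obtain ⟨a, ha⟩ := exists_prime_orderOf_dvd_card' q hqG
  have hba : ¬ (superpowerGraph G).Adj b a := by
    rw [superpowerGraph_adj, hb, ha, Nat.prime_dvd_prime_iff_eq hp hq,
      Nat.prime_dvd_prime_iff_eq hq hp]
    exact fun h => h.2.elim hpq hpq.symm
  have haa : (superpowerGraph G).Adj a a⁻¹ :=
    superpowerGraph_adj.2 ⟨ne_inv_of_orderOf_eq_prime hq hq2 ha, Or.inl (orderOf_inv a).symm.dvd⟩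
  exact not_minConnected_of_twins superpowerGraph_preconnected haa
    (fun _ => superpowerGraph_adj_iff_of_orderOf_eq (orderOf_inv a).symm)
    (fun h => hpq (hb ▸ ha ▸ congrArg orderOf h)) hba

end Superpower

/-- For a finite group `G`, the order superpower graph is minimally
connected iff `G` is a `p`-group for some prime `p`. -/
theorem stmt_15 (G : Type*) [Group G] [Fintype G] :
    MinConnected (superpowerGraph G) ↔
      ∃ p n : ℕ, p.Prime ∧ Nat.card G = p ^ n := by
  constructor
  · intro hmin
    by_contra hpow
    obtain ⟨p, q, hp, hq, hpq, hpG, hqG⟩ :=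
      Nat.exists_distinct_prime_dvd_of_not_prime_pow Nat.card_pos.ne' hpow
    exact not_minConnected_superpowerGraph hp hq hpq hpG hqG hmin
  · rintro ⟨p, n, hp, hcard⟩
    have := Fact.mk hp
    rw [(IsPGroup.iff_card.2 ⟨n, hcard⟩).superpowerGraph_eq_top]
    exact minConnected_top
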